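/- Let R be a commutative ring and N : FinType → Module R a symmetric lax monoidal functor, with associated commutative R-algebra structures on the N(S), and set B := N(Fin 1), H := N(Fin 2), η_L := N(l), η_R := N(r). Then for all n ≥ 2, all 1 ≤ j ≤ n−2, all b ∈ B and all x₁, …, x_{n−1} ∈ H: Seg_n(x₁ ⊗ ⋯ ⊗ x_j·η_R(b) ⊗ x_{j+1} ⊗ ⋯ ⊗ x_{n−1}) = Seg_n(x₁ ⊗ ⋯ ⊗ x_j ⊗ η_L(b)·x_{j+1} ⊗ ⋯ ⊗ x_{n−1}). Consequently Seg_n descends to a well-defined R-linear map H ⊗_B H ⊗_B ⋯ ⊗_B H ((n−1) factors, balanced via η_R on the right of each factor and η_L on the left of the next) → N(Fin n). -/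

import Mathlib

open CategoryTheory CategoryTheory.Limits MonoidalCategory CategoryTheory.Functor.LaxMonoidal
open TensorProduct

noncomputable local instance fintypeCatMonoidal : MonoidalCategory FintypeCat.{0} :=
  monoidalOfHasFiniteCoproducts FintypeCat

noncomputable local instance fintypeCatSymmetric : SymmetricCategory FintypeCat.{0} :=
  symmetricOfHasFiniteCoproducts FintypeCat

variable {R : Type} [CommRing R]

/-- The commutative algebra multiplication on `N(S)`, namely `c_{S,S} ≫ N(∇_S)`,
as a binary operation. -/
noncomputable def nMul (N : LaxBraidedFunctor FintypeCat.{0} (ModuleCat.{0} R))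
    (S : FintypeCat.{0}) (x y : N.obj S) : N.obj S :=
  (μ N.toFunctor S S ≫ N.map (coprod.desc (𝟙 S) (𝟙 S))) (x ⊗ₜ[R] y)

/-- The unit of the commutative algebra `N(S)`, namely `c_1 ≫ N(∅ → S)` applied to `1`. -/
noncomputable def nOne (N : LaxBraidedFunctor FintypeCat.{0} (ModuleCat.{0} R))
    (S : FintypeCat.{0}) : N.obj S :=
  (ε N.toFunctor ≫ N.map (initial.to S)) (1 : R)

/-- `B := N(Fin 1)`. -/
noncomputable def nB (N : LaxBraidedFunctor FintypeCat.{0} (ModuleCat.{0} R)) :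
    ModuleCat.{0} R :=
  N.obj (FintypeCat.of (Fin 1))

/-- `H := N(Fin 2)`. -/
noncomputable def nH (N : LaxBraidedFunctor FintypeCat.{0} (ModuleCat.{0} R)) :
    ModuleCat.{0} R :=
  N.obj (FintypeCat.of (Fin 2))

/-- `l : Fin 1 → Fin 2` picking `0`. -/
def lMap : FintypeCat.of (Fin 1) ⟶ FintypeCat.of (Fin 2) := FintypeCat.homMk fun _ => (0 : Fin 2)

/-- `r : Fin 1 → Fin 2` picking `1`. -/
def rMap : FintypeCat.of (Fin 1) ⟶ FintypeCat.of (Fin 2) := FintypeCat.homMk fun _ => (1 : Fin 2)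

/-- `η_L := N(l) : B → H`. -/
noncomputable def etaL (N : LaxBraidedFunctor FintypeCat.{0} (ModuleCat.{0} R)) :
    nB N ⟶ nH N :=
  N.map lMap

/-- `η_R := N(r) : B → H`. -/
noncomputable def etaR (N : LaxBraidedFunctor FintypeCat.{0} (ModuleCat.{0} R)) :
    nB N ⟶ nH N :=
  N.map rMap

/-- The tensor powers `H^{⊗m}` of `H := N(Fin 2)` in `Module R`. -/
noncomputable def nPow (N : LaxBraidedFunctor FintypeCat.{0} (ModuleCat.{0} R)) :
    ℕ → ModuleCat.{0} R
  | 0 => 𝟙_ (ModuleCat.{0} R)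
  | 1 => nH N
  | m + 2 => nH N ⊗ nPow N (m + 1)

/-- `φ_0 : Fin 2 → Fin (m+2)`, the inclusion. -/
def phiZero (m : ℕ) : FintypeCat.of (Fin 2) ⟶ FintypeCat.of (Fin (m + 2)) :=
  FintypeCat.homMk fun j => ⟨j.1, by omega⟩

/-- The shift `Fin (m+1) → Fin (m+2)`, `j ↦ j + 1`. -/
def shiftMap (m : ℕ) : FintypeCat.of (Fin (m + 1)) ⟶ FintypeCat.of (Fin (m + 2)) :=
  FintypeCat.homMk fun j => ⟨j.1 + 1, by omega⟩

/-- The gluing map `Fin 2 ⊔ Fin (m+1) → Fin (m+2)`; iterating it produces the maps `g_n`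
which restrict to `φ_i` on the `(i+1)`-st summand. -/
noncomputable def glueMap (m : ℕ) :
    FintypeCat.of (Fin 2) ⊗ FintypeCat.of (Fin (m + 1)) ⟶ FintypeCat.of (Fin (m + 2)) :=
  coprod.desc (phiZero m) (shiftMap m)

/-- The Segal morphism `Seg_{m+1} : H^{⊗m} → N(Fin (m+1))`: the iterated coherence
morphism followed by `N(g_{m+1})`. -/
noncomputable def nSeg (N : LaxBraidedFunctor FintypeCat.{0} (ModuleCat.{0} R)) :
    (m : ℕ) → (nPow N m ⟶ N.obj (FintypeCat.of (Fin (m + 1))))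
  | 0 => ε N.toFunctor ≫ N.map (initial.to (FintypeCat.of (Fin 1)))
  | 1 => 𝟙 (nH N)
  | m + 2 =>
      (nH N ◁ nSeg N (m + 1)) ≫
        μ N.toFunctor (FintypeCat.of (Fin 2)) (FintypeCat.of (Fin (m + 2))) ≫
        N.map (glueMap (m + 1))

/-- The pure tensor `x₁ ⊗ ⋯ ⊗ xₘ` as an element of `H^{⊗m}`. -/
noncomputable def powElt (N : LaxBraidedFunctor FintypeCat.{0} (ModuleCat.{0} R)) :
    (m : ℕ) → (Fin m → nH N) → nPow N m
  | 0, _ => (1 : R)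
  | 1, x => x 0
  | m + 2, x => x 0 ⊗ₜ[R] powElt N (m + 1) (fun i => x i.succ)

/-- The submodule of `H^{⊗m}` spanned by the balancing relations
`(x₁ ⊗ ⋯ ⊗ xⱼ·η_R(b) ⊗ x_{j+1} ⊗ ⋯) − (x₁ ⊗ ⋯ ⊗ xⱼ ⊗ η_L(b)·x_{j+1} ⊗ ⋯)`;
the quotient is the balanced tensor product `H ⊗_B ⋯ ⊗_B H`. -/
noncomputable def segRel (N : LaxBraidedFunctor FintypeCat.{0} (ModuleCat.{0} R))
    (m : ℕ) : Submodule R (nPow N m) :=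
  Submodule.span R
    {z | ∃ (j : ℕ) (hj : j + 1 < m) (b : nB N) (x : Fin m → nH N),
      z = powElt N m (Function.update x ⟨j, by omega⟩
            (nMul N _ (x ⟨j, by omega⟩) (etaR N b)))
        - powElt N m (Function.update x ⟨j + 1, by omega⟩
            (nMul N _ (etaL N b) (x ⟨j + 1, by omega⟩)))}


section SegAux

variable (N : LaxBraidedFunctor FintypeCat.{0} (ModuleCat.{0} R))

lemma segAux_hom_congr {M M' : ModuleCat.{0} R} {f g : M ⟶ M'} (h : f = g) (x : M) :
    f x = g x := by rw [h]

theorem segAux_muDesc_hom {X Y S : FintypeCat.{0}} (f : X ⟶ S) (g : Y ⟶ S) :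
    μ N.toFunctor X Y ≫ N.map (coprod.desc f g)
      = (N.map f ⊗ₘ N.map g) ≫ μ N.toFunctor S S ≫ N.map (coprod.desc (𝟙 S) (𝟙 S)) := by
  have h : (coprod.desc f g : X ⊗ Y ⟶ S) = (f ⊗ₘ g) ≫ coprod.desc (𝟙 S) (𝟙 S) := by
    simp [monoidalOfHasFiniteCoproducts.tensorHom]
  rw [h, N.map_comp, ← Category.assoc, ← μ_natural (F := N.toFunctor), Category.assoc]

theorem segAux_muDesc {X Y S : FintypeCat.{0}} (f : X ⟶ S) (g : Y ⟶ S)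
    (a : N.obj X) (b : N.obj Y) :
    N.map (coprod.desc f g) (μ N.toFunctor X Y (a ⊗ₜ[R] b))
      = nMul N S (N.map f a) (N.map g b) := by
  have := segAux_hom_congr (segAux_muDesc_hom N f g) (a ⊗ₜ[R] b)
  simp only [CategoryTheory.comp_apply, Function.comp_apply,
    ModuleCat.MonoidalCategory.tensorHom_tmul] at this
  exact this

theorem segAux_mapMul {S T : FintypeCat.{0}} (f : S ⟶ T) (a b : N.obj S) :
    N.map f (nMul N S a b) = nMul N T (N.map f a) (N.map f b) := by
  have h : (coprod.desc (𝟙 S) (𝟙 S) : S ⊗ S ⟶ S) ≫ f = coprod.desc f f := by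
    ext <;> simp
  rw [← segAux_muDesc N f f a b, ← h, N.map_comp]
  simp [nMul, CategoryTheory.comp_apply, Function.comp_apply]

theorem segAux_mulAssoc (S : FintypeCat.{0}) (a b c : N.obj S) :
    nMul N S (nMul N S a b) c = nMul N S a (nMul N S b c) := by
  set d : S ⊗ S ⟶ S := coprod.desc (𝟙 S) (𝟙 S) with hd
  have hmap : (d ▷ S) ≫ d = (α_ S S S).hom ≫ (S ◁ d) ≫ d := by
    dsimp only [hd, monoidalOfHasFiniteCoproducts.whiskerRight,
      monoidalOfHasFiniteCoproducts.whiskerLeft, monoidalOfHasFiniteCoproducts.associator_hom]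
    apply coprod.hom_ext
    · apply coprod.hom_ext <;> simp [hd, coprod.inl_desc, coprod.inr_desc, coprod.inl_desc_assoc, coprod.inr_desc_assoc]
    · simp [hd, coprod.inl_desc, coprod.inr_desc, coprod.inl_desc_assoc, coprod.inr_desc_assoc]
  have h1 := segAux_hom_congr (μ_natural_left (F := N.toFunctor) d S)
    ((μ N.toFunctor S S (a ⊗ₜ[R] b)) ⊗ₜ[R] c)
  have h2 := segAux_hom_congr (associativity (F := N.toFunctor) S S S)
    ((a ⊗ₜ[R] b) ⊗ₜ[R] c)
  have h3 := segAux_hom_congr (μ_natural_right (F := N.toFunctor) S d)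
    (a ⊗ₜ[R] (μ N.toFunctor S S (b ⊗ₜ[R] c)))
  simp only [CategoryTheory.comp_apply, Function.comp_apply,
    ModuleCat.MonoidalCategory.whiskerRight_apply,
    ModuleCat.MonoidalCategory.whiskerLeft_apply,
    ModuleCat.MonoidalCategory.associator_hom_apply] at h1 h2 h3
  erw [ModuleCat.MonoidalCategory.whiskerLeft_apply] at h2
  have hN : N.map (d ▷ S) ≫ N.map d = N.map (α_ S S S).hom ≫ N.map (S ◁ d) ≫ N.map d := by
    simp only [← N.map_comp]; rw [hmap]
  have h4 := segAux_hom_congr hN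
    ((μ N.toFunctor (S ⊗ S) S) ((μ N.toFunctor S S (a ⊗ₜ[R] b)) ⊗ₜ[R] c))
  simp only [CategoryTheory.comp_apply, Function.comp_apply] at h4
  simp only [nMul, CategoryTheory.comp_apply, Function.comp_apply]
  rw [h1, h3, ← h2, h4]

lemma segAux_phiZero_zero : phiZero 0 = 𝟙 (FintypeCat.of (Fin 2)) := by
  ext j
  rfl

lemma segAux_nSeg_tmul (k : ℕ) (a : nH N) (w : nPow N (k + 1)) :
    nSeg N (k + 2) (a ⊗ₜ[R] w)
      = nMul N (FintypeCat.of (Fin (k + 3))) (N.map (phiZero (k + 1)) a)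
          (N.map (shiftMap (k + 1)) (nSeg N (k + 1) w)) := by
  show N.map (glueMap (k + 1))
      (μ N.toFunctor _ _ ((nH N ◁ nSeg N (k + 1)) (a ⊗ₜ[R] w))) = _
  erw [ModuleCat.MonoidalCategory.whiskerLeft_apply]
  exact segAux_muDesc N (phiZero (k + 1)) (shiftMap (k + 1)) a (nSeg N (k + 1) w)

lemma segAux_tail_update {α : Type} {m : ℕ} (x : Fin (m + 1) → α) (j : Fin m) (v : α) :
    (fun i : Fin m => Function.update x j.succ v i.succ)
      = Function.update (fun i : Fin m => x i.succ) j v := by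
  funext i
  rcases eq_or_ne i j with rfl | h
  · simp
  · rw [Function.update_of_ne (fun hh => h (Fin.succ_inj.mp hh)),
      Function.update_of_ne h]

lemma segAux_tail_update_zero {α : Type} {m : ℕ} (x : Fin (m + 1) → α) (v : α) :
    (fun i : Fin m => Function.update x 0 v i.succ) = fun i : Fin m => x i.succ := by
  funext i
  exact Function.update_of_ne (Fin.succ_ne_zero i) _ _

lemma segAux_powElt_succ (m : ℕ) (y : Fin (m + 2) → nH N) :
    powElt N (m + 2) y = y 0 ⊗ₜ[R] powElt N (m + 1) (fun i => y i.succ) := rfl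

lemma segAux_tail_update' {α : Type} {m j : ℕ} (hj : j < m) (x : Fin (m + 1) → α) (v : α) :
    (fun i : Fin m => Function.update x ⟨j + 1, by omega⟩ v i.succ)
      = Function.update (fun i : Fin m => x i.succ) ⟨j, hj⟩ v :=
  segAux_tail_update x ⟨j, hj⟩ v

lemma segAux_nSeg_mul_left :
    ∀ (k : ℕ) (a : nH N) (w : Fin (k + 1) → nH N),
      nSeg N (k + 1) (powElt N (k + 1) (Function.update w 0
          (nMul N (FintypeCat.of (Fin 2)) a (w 0))))
        = nMul N (FintypeCat.of (Fin (k + 2))) (N.map (phiZero k) a)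
            (nSeg N (k + 1) (powElt N (k + 1) w))
  | 0, a, w => by
    show nMul N (FintypeCat.of (Fin 2)) a (w 0) = _
    rw [segAux_phiZero_zero, N.map_id]
    rfl
  | (k + 1), a, w => by
    have h1 : powElt N (k + 2) (Function.update w 0
        (nMul N (FintypeCat.of (Fin 2)) a (w 0)))
        = (nMul N (FintypeCat.of (Fin 2)) a (w 0)) ⊗ₜ[R]
            powElt N (k + 1) (fun i => w i.succ) := by
      show (Function.update w 0 _ 0) ⊗ₜ[R] powElt N (k + 1) _ = _
      erw [Function.update_self, segAux_tail_update_zero]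
      rfl
    have h2 : powElt N (k + 2) w = (w 0) ⊗ₜ[R] powElt N (k + 1) (fun i => w i.succ) := rfl
    erw [h1, h2, segAux_nSeg_tmul, segAux_nSeg_tmul, segAux_mapMul, segAux_mulAssoc]

lemma segAux_point_eq (k : ℕ) :
    (rMap ≫ phiZero (k + 1) : FintypeCat.of (Fin 1) ⟶ FintypeCat.of (Fin (k + 3)))
      = lMap ≫ phiZero k ≫ shiftMap (k + 1) := by
  ext j
  rfl

lemma segAux_key (k : ℕ) (b : nB N) :
    N.map (phiZero (k + 1)) (etaR N b)
      = N.map (shiftMap (k + 1)) (N.map (phiZero k) (etaL N b)) := by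
  have h : N.map rMap ≫ N.map (phiZero (k + 1))
      = N.map lMap ≫ N.map (phiZero k) ≫ N.map (shiftMap (k + 1)) := by
    simp only [← N.map_comp, Category.assoc]
    rw [segAux_point_eq]
  have := segAux_hom_congr h b
  simp only [CategoryTheory.comp_apply, Function.comp_apply] at this
  exact this

set_option maxHeartbeats 1000000 in
lemma segAux_main :
    ∀ (j m : ℕ) (hj : j + 1 < m) (b : nB N) (x : Fin m → nH N),
      nSeg N m (powElt N m (Function.update x ⟨j, by omega⟩
          (nMul N _ (x ⟨j, by omega⟩) (etaR N b))))
        = nSeg N m (powElt N m (Function.update x ⟨j + 1, by omega⟩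
          (nMul N _ (etaL N b) (x ⟨j + 1, by omega⟩)))) := by
  intro j
  induction j with
  | zero =>
    intro m hj b x
    obtain ⟨k, rfl⟩ : ∃ k, m = k + 2 := ⟨m - 2, by omega⟩
    set t : Fin (k + 1) → nH N := fun i => x i.succ with ht
    have e0 : (⟨0, by omega⟩ : Fin (k + 2)) = 0 := Fin.ext (by simp)
    have e1 : (⟨1, by omega⟩ : Fin (k + 2)) = (0 : Fin (k + 1)).succ := Fin.ext (by simp)
    have ex1 : x ⟨1, by omega⟩ = t 0 := by rw [e1]
    -- LHS
    have hL : powElt N (k + 2) (Function.update x ⟨0, by omega⟩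
        (nMul N _ (x ⟨0, by omega⟩) (etaR N b)))
        = (nMul N _ (x ⟨0, by omega⟩) (etaR N b)) ⊗ₜ[R] powElt N (k + 1) t := by
      rw [e0]
      show (Function.update x 0 _ 0) ⊗ₜ[R] powElt N (k + 1) _ = _
      erw [Function.update_self, segAux_tail_update_zero]
      rfl
    -- RHS
    have hR : powElt N (k + 2) (Function.update x ⟨1, by omega⟩
        (nMul N _ (etaL N b) (x ⟨1, by omega⟩)))
        = (x ⟨0, by omega⟩) ⊗ₜ[R]
            powElt N (k + 1) (Function.update t 0 (nMul N _ (etaL N b) (t 0))) := by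
      rw [ex1, e1]
      show (Function.update x _ _ 0) ⊗ₜ[R] powElt N (k + 1) _ = _
      erw [Function.update_of_ne (by exact (Fin.succ_ne_zero _).symm),
        segAux_tail_update, e0]
    erw [hL, hR, segAux_nSeg_tmul, segAux_nSeg_tmul, segAux_nSeg_mul_left,
      segAux_mapMul, segAux_mulAssoc, segAux_mapMul, segAux_key]
  | succ j ih =>
    intro m hj b x
    obtain ⟨k, rfl⟩ : ∃ k, m = k + 2 := ⟨m - 2, by omega⟩
    have hjk : j + 1 < k + 1 := by omega
    have key := ih (k + 1) hjk b (fun i => x i.succ)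
    have h0L : (0 : Fin (k + 2)) ≠ ⟨j + 1, by omega⟩ := by
      simp [Fin.ext_iff]
    have h0R : (0 : Fin (k + 2)) ≠ ⟨j + 2, by omega⟩ := by
      simp [Fin.ext_iff]
    erw [segAux_powElt_succ, segAux_powElt_succ, Function.update_of_ne h0L,
      segAux_tail_update' (by omega : j < k + 1),
      segAux_tail_update' (by omega : j + 1 < k + 1), segAux_nSeg_tmul, segAux_nSeg_tmul]
    have key' : (nSeg N (k + 1)) (powElt N (k + 1) (Function.update (fun i => x i.succ)
          ⟨j, by omega⟩ (nMul N _ (x ⟨j + 1, by omega⟩) (etaR N b))))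
        = (nSeg N (k + 1)) (powElt N (k + 1) (Function.update (fun i => x i.succ)
          ⟨j + 1, by omega⟩ (nMul N _ (etaL N b) (x ⟨j + 2, by omega⟩)))) := key
    rw [key']

end SegAux

/-- STATEMENT 17: for a symmetric lax monoidal `N : FinType ⥤ Module R`, with
`B := N(Fin 1)`, `H := N(Fin 2)`, `η_L := N(l)`, `η_R := N(r)`, the Segal maps are
balanced: `Seg_n(x₁ ⊗ ⋯ ⊗ xⱼ·η_R(b) ⊗ x_{j+1} ⊗ ⋯) = Seg_n(x₁ ⊗ ⋯ ⊗ xⱼ ⊗ η_L(b)·x_{j+1} ⊗ ⋯)`;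
consequently `Seg_n` descends to a well-defined `R`-linear map on the balanced tensor
product `H ⊗_B ⋯ ⊗_B H`. -/
theorem segal_balanced (N : LaxBraidedFunctor FintypeCat.{0} (ModuleCat.{0} R)) :
    (∀ (m j : ℕ) (hj : j + 1 < m) (b : nB N) (x : Fin m → nH N),
      nSeg N m (powElt N m (Function.update x ⟨j, by omega⟩
          (nMul N _ (x ⟨j, by omega⟩) (etaR N b))))
        = nSeg N m (powElt N m (Function.update x ⟨j + 1, by omega⟩
          (nMul N _ (etaL N b) (x ⟨j + 1, by omega⟩))))) ∧
    ∀ m : ℕ, ∃ g : (nPow N m ⧸ segRel N m) →ₗ[R] N.obj (FintypeCat.of (Fin (m + 1))),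
      ∀ y : nPow N m, g (Submodule.Quotient.mk y) = nSeg N m y := by
  constructor
  · intro m j hj b x
    exact segAux_main N j m hj b x
  · intro m
    have hle : segRel N m ≤ LinearMap.ker (nSeg N m).hom := by
      rw [segRel, Submodule.span_le]
      rintro z ⟨j, hj, b, x, rfl⟩
      simp only [SetLike.mem_coe, LinearMap.mem_ker, map_sub, sub_eq_zero]
      exact segAux_main N j m hj b x
    exact ⟨Submodule.liftQ (segRel N m) (nSeg N m).hom hle, fun y => rfl⟩
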